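/- arXiv:2012.01807 — 2 statements merged into one kernel-verified Lean document; each statement's English description precedes it below -/
import Mathlib

section
/- The conditional second moment of the standardized outcome given selection satisfies ∫_{-∞}^{∞} z(y)² · (1/(σ Φ(μ₂))) φ(z(y)) Φ(ζ(y)) dy = 1 − μ₂ ρ² φ(μ₂)/Φ(μ₂). -/
/-!
Substituting `z = (y - μ₁) / σ` reduces the claim to `∫ z² φ(z) Φ(a + b z) dz = Φ(μ₂) - ρ² μ₂ φ(μ₂)`
with `a = μ₂ / √(1 - ρ²)`, `b = ρ / √(1 - ρ²)`, so that `a / √(1 + b²) = μ₂`. Integrating by parts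
against `φ' = -z φ` splits the left side into `∫ φ(z) Φ(a + b z) dz + b ∫ z φ(z) φ(a + b z) dz`.
Completing the square, `φ(z) φ(a + b z)` is `φ(c) / √(1 + b²)` times the density of
`N(-ab / (1 + b²), 1 / (1 + b²))`, where `c = a / √(1 + b²)`; this evaluates the second integral
through the Gaussian mean. It also shows that, as functions of `a`, `∫ φ(z) Φ(a + b z) dz` and
`Φ(a / √(1 + b²))` have the same derivative; both vanish as `a → -∞`, so they are equal.
-/

open MeasureTheory Set

/-- Standard normal density. -/
noncomputable def phi (t : ℝ) : ℝ := Real.exp (-(t ^ 2) / 2) / Real.sqrt (2 * Real.pi)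

/-- Standard normal cumulative distribution function. -/
noncomputable def Phi (x : ℝ) : ℝ := ∫ t in Set.Iic x, phi t

open Real Filter Topology ProbabilityTheory

lemma eq_of_hasDerivAt_of_tendsto_atBot {f g f' : ℝ → ℝ} (hf : ∀ x, HasDerivAt f (f' x) x)
    (hg : ∀ x, HasDerivAt g (f' x) x) (hf0 : Tendsto f atBot (𝓝 0))
    (hg0 : Tendsto g atBot (𝓝 0)) (x : ℝ) : f x = g x := by
  have hconst (y : ℝ) : f y - g y = f x - g x :=
    is_const_of_deriv_eq_zero (fun y ↦ ((hf y).sub (hg y)).differentiableAt)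
      (fun y ↦ by simpa using ((hf y).sub (hg y)).deriv) y x
  have hlim : Tendsto (fun y ↦ f y - g y) atBot (𝓝 (f x - g x)) :=
    tendsto_const_nhds.congr fun y ↦ (hconst y).symm
  have := tendsto_nhds_unique hlim (by simpa using hf0.sub hg0)
  linarith

lemma phi_eq_gaussianPDFReal : phi = gaussianPDFReal 0 1 := by
  ext t
  simp [phi, gaussianPDFReal_def, div_eq_inv_mul]

lemma phi_pos (t : ℝ) : 0 < phi t := by
  rw [phi_eq_gaussianPDFReal]; exact gaussianPDFReal_pos _ _ _ one_ne_zero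

lemma norm_phi_le_one (t : ℝ) : ‖phi t‖ ≤ 1 := by
  rw [Real.norm_of_nonneg (phi_pos t).le, phi, div_le_one (by positivity)]
  calc exp (-t ^ 2 / 2) ≤ 1 := exp_le_one_iff.2 (by nlinarith [sq_nonneg t])
    _ ≤ √(2 * π) := by rw [Real.one_le_sqrt]; nlinarith [pi_gt_three]

@[fun_prop]
lemma continuous_phi : Continuous phi := by
  unfold phi; fun_prop

lemma integrable_phi : Integrable phi := by
  rw [phi_eq_gaussianPDFReal]; exact integrable_gaussianPDFReal _ _

lemma hasDerivAt_phi (t : ℝ) : HasDerivAt phi (-t * phi t) t := by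
  have h : HasDerivAt (fun t : ℝ ↦ -t ^ 2 / 2) (-t) t :=
    ((hasDerivAt_pow 2 t).fun_neg.div_const 2).congr_deriv (by push_cast; ring)
  exact (h.exp.div_const √(2 * π)).congr_deriv (by unfold phi; ring)

lemma integrable_pow_mul_phi (n : ℕ) : Integrable fun t ↦ t ^ n * phi t := by
  have := (integrable_rpow_mul_exp_neg_mul_sq (b := 1 / 2) (by norm_num)
    (s := n) (by linarith [n.cast_nonneg (α := ℝ)])).div_const √(2 * π)
  convert this using 2 with t
  rw [Real.rpow_natCast, phi]
  ring_nf

lemma Phi_eq_cdf (x : ℝ) : Phi x = cdf (gaussianReal 0 1) x := by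
  rw [cdf_eq_real, measureReal_def, gaussianReal_apply_eq_integral _ one_ne_zero,
    ENNReal.toReal_ofReal (setIntegral_nonneg measurableSet_Iic fun t _ ↦
      gaussianPDFReal_nonneg _ _ t), Phi, phi_eq_gaussianPDFReal]

lemma norm_Phi_le_one (x : ℝ) : ‖Phi x‖ ≤ 1 := by
  rw [Phi_eq_cdf, Real.norm_of_nonneg (cdf_nonneg _ x)]
  exact cdf_le_one _ x

lemma Phi_pos (x : ℝ) : 0 < Phi x := by
  rw [Phi, setIntegral_pos_iff_support_of_nonneg_ae (ae_of_all _ fun t ↦ (phi_pos t).le)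
    integrable_phi.integrableOn, Function.support_eq_univ fun t ↦ (phi_pos t).ne', univ_inter,
    Real.volume_Iic]
  exact ENNReal.zero_lt_top

lemma hasDerivAt_Phi (x : ℝ) : HasDerivAt Phi (phi x) x := by
  have h : Phi = fun y ↦ Phi 0 + ∫ t in (0 : ℝ)..y, phi t := by
    ext y
    rw [← intervalIntegral.integral_Iic_sub_Iic integrable_phi.integrableOn
      integrable_phi.integrableOn, Phi, Phi, add_sub_cancel]
  rw [h]
  exact (continuous_phi.integral_hasStrictDerivAt 0 x).hasDerivAt.const_add _

@[fun_prop]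
lemma continuous_Phi : Continuous Phi :=
  continuous_iff_continuousAt.2 fun x ↦ (hasDerivAt_Phi x).continuousAt

lemma tendsto_Phi_atBot : Tendsto Phi atBot (𝓝 0) := by
  simpa only [← funext Phi_eq_cdf] using tendsto_cdf_atBot (gaussianReal 0 1)

lemma phi_mul_phi_affine (a b z : ℝ) :
    phi z * phi (a + b * z) = phi (a / √(1 + b ^ 2)) / √(1 + b ^ 2) *
      gaussianPDFReal (-(a * b) / (1 + b ^ 2)) (1 + b ^ 2).toNNReal⁻¹ z := by
  have hk : 0 < 1 + b ^ 2 := by positivity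
  have hsqrt : √(2 * π * (1 + b ^ 2)⁻¹) = √(2 * π) / √(1 + b ^ 2) := by
    rw [sqrt_mul (by positivity), sqrt_inv, div_eq_mul_inv]
  have hsq : (a / √(1 + b ^ 2)) ^ 2 = a ^ 2 / (1 + b ^ 2) := by rw [div_pow, sq_sqrt hk.le]
  have hexp : -z ^ 2 / 2 + -(a + b * z) ^ 2 / 2
      = -(a ^ 2 / (1 + b ^ 2)) / 2 + -(z - -(a * b) / (1 + b ^ 2)) ^ 2 / (2 * (1 + b ^ 2)⁻¹) := by
    field_simp; ring
  simp only [phi, gaussianPDFReal_def, NNReal.coe_inv, Real.coe_toNNReal _ hk.le, hsqrt, hsq]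
  rw [div_mul_div_comm, ← exp_add, hexp, exp_add]
  field_simp

lemma toNNReal_one_add_sq_inv_ne_zero (b : ℝ) : (1 + b ^ 2).toNNReal⁻¹ ≠ 0 := by
  simp only [ne_eq, inv_eq_zero, Real.toNNReal_eq_zero, not_le]
  positivity

lemma integral_phi_mul_phi_affine (a b : ℝ) :
    ∫ z, phi z * phi (a + b * z) = phi (a / √(1 + b ^ 2)) / √(1 + b ^ 2) := by
  simp_rw [phi_mul_phi_affine a b]
  rw [integral_const_mul, integral_gaussianPDFReal_eq_one _ (toNNReal_one_add_sq_inv_ne_zero b),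
    mul_one]

lemma integral_mul_phi_mul_phi_affine (a b : ℝ) :
    ∫ z, z * (phi z * phi (a + b * z))
      = -(a * b) / (1 + b ^ 2) * (phi (a / √(1 + b ^ 2)) / √(1 + b ^ 2)) := by
  have hmean := integral_gaussianReal_eq_integral_smul (f := fun z ↦ z)
    (μ := -(a * b) / (1 + b ^ 2)) (toNNReal_one_add_sq_inv_ne_zero b)
  simp_rw [integral_id_gaussianReal, smul_eq_mul, mul_comm (gaussianPDFReal _ _ _)] at hmean
  simp_rw [phi_mul_phi_affine a b, mul_left_comm _ (phi _ / _)]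
  rw [integral_const_mul, ← hmean, mul_comm]

lemma integrable_phi_mul_Phi_affine (a b : ℝ) : Integrable fun z ↦ phi z * Phi (a + b * z) :=
  integrable_phi.mul_bdd (by fun_prop) (ae_of_all _ fun z ↦ norm_Phi_le_one _)

lemma hasDerivAt_integral_phi_mul_Phi_affine (b x : ℝ) :
    HasDerivAt (fun x ↦ ∫ z, phi z * Phi (x + b * z)) (∫ z, phi z * phi (x + b * z)) x :=
  (hasDerivAt_integral_of_dominated_loc_of_deriv_le (F := fun x z ↦ phi z * Phi (x + b * z))
    (F' := fun x z ↦ phi z * phi (x + b * z)) (bound := phi) univ_mem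
    (.of_forall fun x ↦ (integrable_phi_mul_Phi_affine x b).aestronglyMeasurable)
    (integrable_phi_mul_Phi_affine x b) (by fun_prop)
    (ae_of_all _ fun z y _ ↦ by
      rw [norm_mul, Real.norm_of_nonneg (phi_pos z).le]
      exact mul_le_of_le_one_right (phi_pos z).le (norm_phi_le_one _))
    integrable_phi
    (ae_of_all _ fun z y _ ↦
      ((hasDerivAt_Phi _).comp y ((hasDerivAt_id y).add_const _)).const_mul (phi z) |>.congr_deriv
        (by simp))).2

lemma tendsto_integral_phi_mul_Phi_affine_atBot (b : ℝ) :
    Tendsto (fun x ↦ ∫ z, phi z * Phi (x + b * z)) atBot (𝓝 0) := by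
  have := tendsto_integral_filter_of_dominated_convergence (μ := volume) (l := atBot)
    (F := fun x z ↦ phi z * Phi (x + b * z)) (f := fun _ ↦ 0) phi
    (.of_forall fun x ↦ (integrable_phi_mul_Phi_affine x b).aestronglyMeasurable)
    (.of_forall fun x ↦ ae_of_all _ fun z ↦ by
      rw [norm_mul, Real.norm_of_nonneg (phi_pos z).le]
      exact mul_le_of_le_one_right (phi_pos z).le (norm_Phi_le_one _))
    integrable_phi
    (ae_of_all _ fun z ↦ by
      simpa using (tendsto_Phi_atBot.comp (tendsto_atBot_add_const_right _ _ tendsto_id)).const_mul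
        (phi z))
  simpa using this

lemma integral_phi_mul_Phi_affine (a b : ℝ) :
    ∫ z, phi z * Phi (a + b * z) = Phi (a / √(1 + b ^ 2)) := by
  refine eq_of_hasDerivAt_of_tendsto_atBot (hasDerivAt_integral_phi_mul_Phi_affine b) (fun x ↦ ?_)
    (tendsto_integral_phi_mul_Phi_affine_atBot b)
    (tendsto_Phi_atBot.comp (tendsto_id.atBot_div_const (by positivity))) a
  rw [integral_phi_mul_phi_affine]
  exact ((hasDerivAt_Phi _).comp x ((hasDerivAt_id x).div_const _)).congr_deriv
    (by simp [div_eq_mul_inv])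

lemma integral_sq_mul_phi_mul_Phi_affine (a b : ℝ) :
    ∫ z, z ^ 2 * (phi z * Phi (a + b * z))
      = (∫ z, phi z * Phi (a + b * z)) + b * ∫ z, z * (phi z * phi (a + b * z)) := by
  have hΦ (n : ℕ) : Integrable fun z ↦ z ^ n * phi z * Phi (a + b * z) :=
    (integrable_pow_mul_phi n).mul_bdd (by fun_prop) (ae_of_all _ fun z ↦ norm_Phi_le_one _)
  have hφ : Integrable fun z ↦ z * (phi z * phi (a + b * z)) := by
    simpa [mul_assoc] using (integrable_pow_mul_phi 1).mul_bdd (by fun_prop)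
      (ae_of_all _ fun z ↦ norm_phi_le_one (a + b * z))
  have hu (z : ℝ) : HasDerivAt (fun z ↦ z * Phi (a + b * z))
      (Phi (a + b * z) + b * (z * phi (a + b * z))) z :=
    ((hasDerivAt_id z).mul ((hasDerivAt_Phi _).comp z
      (((hasDerivAt_id z).const_mul b).const_add a))).congr_deriv
      (by simp only [id_eq, Function.comp_apply, one_mul, mul_one, add_right_inj]; ring)
  have hparts := integral_mul_deriv_eq_deriv_mul_of_integrable (fun z _ ↦ hu z)
    (fun z _ ↦ hasDerivAt_phi z)
    ((hΦ 2).neg.congr (ae_of_all _ fun z ↦ by simp only [Pi.mul_apply, Pi.neg_apply]; ring))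
    (((integrable_phi_mul_Phi_affine a b).add (hφ.const_mul b)).congr
      (ae_of_all _ fun z ↦ by simp only [Pi.mul_apply, Pi.add_apply]; ring))
    ((hΦ 1).congr (ae_of_all _ fun z ↦ by simp only [Pi.mul_apply]; ring))
  calc ∫ z, z ^ 2 * (phi z * Phi (a + b * z))
      = -∫ z, z * Phi (a + b * z) * (-z * phi z) := by
        rw [← integral_neg]; congr 1 with z; ring
    _ = ∫ z, (phi z * Phi (a + b * z) + b * (z * (phi z * phi (a + b * z)))) := by
        rw [hparts, neg_neg]; congr 1 with z; ring
    _ = _ := by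
        rw [integral_add (integrable_phi_mul_Phi_affine a b) (hφ.const_mul b), integral_const_mul]

lemma integral_sq_mul_phi_mul_Phi_corr (μ ρ : ℝ) (hρ : ρ ^ 2 < 1) :
    ∫ z, z ^ 2 * (phi z * Phi ((μ + ρ * z) / √(1 - ρ ^ 2))) = Phi μ - μ * ρ ^ 2 * phi μ := by
  set s := √(1 - ρ ^ 2)
  have hs : 0 < s := sqrt_pos.2 (by linarith)
  have hs2 : s ^ 2 = 1 - ρ ^ 2 := sq_sqrt (by linarith)
  have hk : √(1 + (ρ / s) ^ 2) = s⁻¹ := by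
    rw [show 1 + (ρ / s) ^ 2 = s⁻¹ ^ 2 by field_simp; linarith, sqrt_sq (inv_pos.2 hs).le]
  simp_rw [add_div, mul_div_right_comm ρ]
  rw [integral_sq_mul_phi_mul_Phi_affine, integral_phi_mul_Phi_affine,
    integral_mul_phi_mul_phi_affine, hk, div_inv_eq_mul, div_mul_cancel₀ _ hs.ne']
  field_simp
  rw [hs2]
  ring

theorem GH_conditional_second_moment (μ₁ μ₂ σ ρ : ℝ) (hσ : 0 < σ) (hρ₁ : -1 < ρ) (hρ₂ : ρ < 1)
    (z ζ : ℝ → ℝ)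
    (hz : ∀ y, z y = (y - μ₁) / σ)
    (hζ : ∀ y, ζ y = (μ₂ + ρ * z y) / Real.sqrt (1 - ρ ^ 2)) :
    (∫ y : ℝ, z y ^ 2 * ((1 / (σ * Phi μ₂)) * phi (z y) * Phi (ζ y)))
      = 1 - μ₂ * ρ ^ 2 * phi μ₂ / Phi μ₂ := by
  set g : ℝ → ℝ := fun t ↦ t ^ 2 * (phi t * Phi ((μ₂ + ρ * t) / √(1 - ρ ^ 2)))
  have hg : ∫ t, g t = Phi μ₂ - μ₂ * ρ ^ 2 * phi μ₂ :=
    integral_sq_mul_phi_mul_Phi_corr μ₂ ρ (by nlinarith)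
  calc (∫ y, z y ^ 2 * ((1 / (σ * Phi μ₂)) * phi (z y) * Phi (ζ y)))
      = (σ * Phi μ₂)⁻¹ * ∫ y, g ((y - μ₁) / σ) := by
        rw [← integral_const_mul]; congr 1 with y; simp only [g, hζ, hz]; ring
    _ = (σ * Phi μ₂)⁻¹ * (σ * ∫ t, g t) := by
        rw [integral_sub_right_eq_self (fun x ↦ g (x / σ)), Measure.integral_comp_div,
          abs_of_pos hσ, smul_eq_mul]
    _ = 1 - μ₂ * ρ ^ 2 * phi μ₂ / Phi μ₂ := by
        rw [hg]; field_simp [(Phi_pos μ₂).ne']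
end

section
/- The conditional expectation of the hazard term given selection satisfies ∫_{-∞}^{∞} (φ(ζ(y))/Φ(ζ(y))) · (1/(σ Φ(μ₂))) φ(z(y)) Φ(ζ(y)) dy = √(1 − ρ²) φ(μ₂)/Φ(μ₂); equivalently, (1/(σ Φ(μ₂))) ∫ φ(ζ(y)) φ(z(y)) dy = √(1 − ρ²) φ(μ₂)/Φ(μ₂). -/
open MeasureTheory Set

/-!
Completing the square, `ζ(y)² + z(y)² = μ₂² + w(y)²` with `w = (z + ρ μ₂) / √(1 - ρ²)`, so
`φ(ζ) φ(z) = φ(μ₂) φ(w)`. As `w` is affine in `y` with slope `1 / (σ √(1 - ρ²))`,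
integrating `φ(w(y))` over `y` gives `σ √(1 - ρ²)`.
-/

lemma phi_mul_phi_of_sq_add_sq_eq {a b c d : ℝ} (h : a ^ 2 + b ^ 2 = c ^ 2 + d ^ 2) :
    phi a * phi b = phi c * phi d := by
  simp only [phi, div_mul_div_comm, ← Real.exp_add]
  congr 2
  linear_combination -h / 2

lemma integral_phi : ∫ t, phi t = 1 := by
  have hgauss : ∫ t : ℝ, Real.exp (-(t ^ 2) / 2) = Real.sqrt (2 * Real.pi) := by
    simpa [neg_div, div_eq_inv_mul, div_inv_eq_mul, mul_comm] using integral_gaussian (1 / 2)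
  simp only [phi, integral_div, hgauss]
  exact div_self (by positivity)

lemma integral_phi_sub_div (m : ℝ) {τ : ℝ} (hτ : 0 < τ) : ∫ y, phi ((y - m) / τ) = τ := by
  rw [integral_sub_right_eq_self (fun y => phi (y / τ)) m, Measure.integral_comp_div, integral_phi,
    abs_of_pos hτ, smul_eq_mul, mul_one]

theorem GH_hazard_conditional_mean (μ₁ μ₂ σ ρ : ℝ) (hσ : 0 < σ) (hρ₁ : -1 < ρ) (hρ₂ : ρ < 1)
    (z ζ : ℝ → ℝ)
    (hz : ∀ y, z y = (y - μ₁) / σ)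
    (hζ : ∀ y, ζ y = (μ₂ + ρ * z y) / Real.sqrt (1 - ρ ^ 2)) :
    (1 / (σ * Phi μ₂)) * ∫ y : ℝ, phi (ζ y) * phi (z y)
      = Real.sqrt (1 - ρ ^ 2) * phi μ₂ / Phi μ₂ := by
  set s := Real.sqrt (1 - ρ ^ 2)
  have hs : 0 < s := Real.sqrt_pos.mpr (by nlinarith)
  have hs_sq : s ^ 2 = 1 - ρ ^ 2 := Real.sq_sqrt (by nlinarith)
  have hfactor : ∀ y, phi (ζ y) * phi (z y)
      = phi μ₂ * phi ((y - (μ₁ - σ * ρ * μ₂)) / (σ * s)) := fun y => by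
    apply phi_mul_phi_of_sq_add_sq_eq
    rw [hζ, hz]
    field_simp
    linear_combination ((y - μ₁) ^ 2 - μ₂ ^ 2 * σ ^ 2) * hs_sq
  simp only [hfactor, integral_const_mul, integral_phi_sub_div _ (mul_pos hσ hs)]
  field_simp
end
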